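/- arXiv:2105.06081 — 4 statements merged into one kernel-verified Lean document; each statement's English description precedes it below -/
import Mathlib

section
/- The lifted join ⊔̂ on G-Abst, defined by ĝ₁ ⊔̂ ĝ₂ = α({a ⊔ b : a ∈ γ(ĝ₁), b ∈ γ(ĝ₂)}), is idempotent: ĝ ⊔̂ ĝ = ĝ for all ĝ ∈ G-Abst. -/
inductive Abst | nullable | null | nonnull
  deriving DecidableEq

namespace Abst

def join : Abst → Abst → Abst
  | nullable, _ => nullable
  | _, nullable => nullable
  | null, null => null
  | nonnull, nonnull => nonnull
  | null, nonnull => nullable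
  | nonnull, null => nullable

inductive le : Abst → Abst → Prop
  | refl (a : Abst) : le a a
  | null_le : le null nullable
  | nonnull_le : le nonnull nullable

end Abst

inductive GAbst | nullable | null | nonnull | q | qnull | qnonnull
  deriving DecidableEq

def gamma : GAbst → Set Abst
  | .nullable => {.nullable}
  | .null => {.null}
  | .nonnull => {.nonnull}
  | .q => Set.univ
  | .qnull => {.null, .nullable}
  | .qnonnull => {.nonnull, .nullable}

open Classical in
noncomputable def alpha (A : Set Abst) : GAbst :=
  if A = {Abst.null} then .null
  else if A = {Abst.nonnull} then .nonnull
  else if A = {Abst.nullable} then .nullable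
  else if A = {Abst.null, Abst.nullable} then .qnull
  else if A = {Abst.nonnull, Abst.nullable} then .qnonnull
  else .q

noncomputable def gjoin (g₁ g₂ : GAbst) : GAbst :=
  alpha {c | ∃ a ∈ gamma g₁, ∃ b ∈ gamma g₂, c = Abst.join a b}

def embed : Abst → GAbst
  | .nullable => .nullable
  | .null => .null
  | .nonnull => .nonnull

lemma set_ne_of_mem {S T : Set Abst} (x : Abst) (hx : x ∈ S) (hnx : x ∉ T) : S ≠ T :=
  fun h => hnx (h ▸ hx)

theorem gjoin_idem : ∀ g : GAbst, gjoin g g = g := by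
  have hset : ∀ g : GAbst,
      {c | ∃ a ∈ gamma g, ∃ b ∈ gamma g, c = Abst.join a b} = gamma g := by
    intro g
    ext c
    constructor
    · rintro ⟨a, ha, b, hb, rfl⟩
      cases g <;> cases a <;> cases b <;> simp_all [gamma, Abst.join]
    · intro h
      exact ⟨c, h, c, h, by cases c <;> rfl⟩
  intro g
  rw [gjoin, hset]
  have h1 : (Set.univ : Set Abst) ≠ {Abst.null} :=
    set_ne_of_mem Abst.nonnull trivial (by simp)
  have h2 : (Set.univ : Set Abst) ≠ {Abst.nonnull} :=
    set_ne_of_mem Abst.null trivial (by simp)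
  have h3 : (Set.univ : Set Abst) ≠ {Abst.nullable} :=
    set_ne_of_mem Abst.null trivial (by simp)
  have h4 : (Set.univ : Set Abst) ≠ {Abst.null, Abst.nullable} :=
    set_ne_of_mem Abst.nonnull trivial (by simp)
  have h5 : (Set.univ : Set Abst) ≠ {Abst.nonnull, Abst.nullable} :=
    set_ne_of_mem Abst.null trivial (by simp)
  have h6 : ({Abst.null, Abst.nullable} : Set Abst) ≠ {Abst.null} :=
    set_ne_of_mem Abst.nullable (by simp) (by simp)
  have h7 : ({Abst.null, Abst.nullable} : Set Abst) ≠ {Abst.nonnull} :=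
    set_ne_of_mem Abst.null (by simp) (by simp)
  have h8 : ({Abst.null, Abst.nullable} : Set Abst) ≠ {Abst.nullable} :=
    set_ne_of_mem Abst.null (by simp) (by simp)
  have h9 : ({Abst.nonnull, Abst.nullable} : Set Abst) ≠ {Abst.null} :=
    set_ne_of_mem Abst.nonnull (by simp) (by simp)
  have h10 : ({Abst.nonnull, Abst.nullable} : Set Abst) ≠ {Abst.nonnull} :=
    set_ne_of_mem Abst.nullable (by simp) (by simp)
  have h11 : ({Abst.nonnull, Abst.nullable} : Set Abst) ≠ {Abst.nullable} :=
    set_ne_of_mem Abst.nonnull (by simp) (by simp)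
  have h12 : ({Abst.nonnull, Abst.nullable} : Set Abst) ≠ {Abst.null, Abst.nullable} :=
    set_ne_of_mem Abst.nonnull (by simp) (by simp)
  have h13 : ({Abst.nullable} : Set Abst) ≠ {Abst.null} :=
    set_ne_of_mem Abst.nullable (by simp) (by simp)
  have h14 : ({Abst.nullable} : Set Abst) ≠ {Abst.nonnull} :=
    set_ne_of_mem Abst.nullable (by simp) (by simp)
  have h15 : ({Abst.null} : Set Abst) ≠ {Abst.nonnull} :=
    set_ne_of_mem Abst.null (by simp) (by simp)
  have h16 : ({Abst.nonnull} : Set Abst) ≠ {Abst.null} :=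
    set_ne_of_mem Abst.nonnull (by simp) (by simp)
  cases g <;>
    simp [alpha, gamma, h1, h2, h3, h4, h5, h6, h7, h8, h9, h10, h11, h12, h13, h14, h15, h16]
end

section
/- The lifted join on the naive lifting Abst ∪ {?} (without the intermediate elements ?Null and ?NonNull) fails associativity: Null ⊔̂ (NonNull ⊔̂ ?) = ? while (Null ⊔̂ NonNull) ⊔̂ ? = Nullable, under the abstraction α' mapping into Abst ∪ {?}. -/
inductive LAbst | nullable | null | nonnull | q
  deriving DecidableEq

def gammaL : LAbst → Set Abst
  | .nullable => {.nullable}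
  | .null => {.null}
  | .nonnull => {.nonnull}
  | .q => Set.univ

open Classical in
noncomputable def alphaL (A : Set Abst) : LAbst :=
  if A = {Abst.null} then .null
  else if A = {Abst.nonnull} then .nonnull
  else if A = {Abst.nullable} then .nullable
  else .q

noncomputable def njoin (x y : LAbst) : LAbst :=
  alphaL {c | ∃ a ∈ gammaL x, ∃ b ∈ gammaL y, c = Abst.join a b}

lemma set1 : {c | ∃ a ∈ gammaL .nonnull, ∃ b ∈ gammaL .q, c = Abst.join a b}
    = ({Abst.nullable, Abst.nonnull} : Set Abst) := by
  ext c
  simp only [gammaL, Set.mem_singleton_iff, Set.mem_univ, true_and, Set.mem_setOf_eq,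
    Set.mem_insert_iff, exists_eq_left]
  constructor
  · rintro ⟨b, rfl⟩; cases b <;> simp [Abst.join]
  · rintro (rfl | rfl)
    · exact ⟨.null, rfl⟩
    · exact ⟨.nonnull, rfl⟩

lemma pair_ne (x y : Abst) (hxy : x ≠ y) (z : Abst) :
    ({x, y} : Set Abst) ≠ {z} := by
  intro h
  have hx : x ∈ ({z} : Set Abst) := h ▸ (by simp)
  have hy : y ∈ ({z} : Set Abst) := h ▸ (by simp)
  simp at hx hy
  exact hxy (hx.trans hy.symm)

lemma alpha_pair : alphaL ({Abst.nullable, Abst.nonnull} : Set Abst) = .q := by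
  unfold alphaL
  rw [if_neg (pair_ne _ _ (by decide) _), if_neg (pair_ne _ _ (by decide) _),
    if_neg (pair_ne _ _ (by decide) _)]

lemma step1 : njoin .nonnull .q = .q := by
  unfold njoin; rw [set1, alpha_pair]

lemma set2 : {c | ∃ a ∈ gammaL .null, ∃ b ∈ gammaL .q, c = Abst.join a b}
    = ({Abst.nullable, Abst.null} : Set Abst) := by
  ext c
  simp only [gammaL, Set.mem_singleton_iff, Set.mem_univ, true_and, Set.mem_setOf_eq,
    Set.mem_insert_iff, exists_eq_left]
  constructor
  · rintro ⟨b, rfl⟩; cases b <;> simp [Abst.join]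
  · rintro (rfl | rfl)
    · exact ⟨.nonnull, rfl⟩
    · exact ⟨.null, rfl⟩

lemma alpha_pair2 : alphaL ({Abst.nullable, Abst.null} : Set Abst) = .q := by
  unfold alphaL
  rw [if_neg (pair_ne _ _ (by decide) _), if_neg (pair_ne _ _ (by decide) _),
    if_neg (pair_ne _ _ (by decide) _)]

lemma set3 : {c | ∃ a ∈ gammaL .null, ∃ b ∈ gammaL .nonnull, c = Abst.join a b}
    = ({Abst.nullable} : Set Abst) := by
  ext c
  simp [gammaL, Abst.join]

lemma set4 : {c | ∃ a ∈ gammaL .nullable, ∃ b ∈ gammaL .q, c = Abst.join a b}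
    = ({Abst.nullable} : Set Abst) := by
  ext c
  simp only [gammaL, Set.mem_singleton_iff, Set.mem_univ, true_and, Set.mem_setOf_eq,
    exists_eq_left]
  constructor
  · rintro ⟨b, rfl⟩; cases b <;> simp [Abst.join]
  · rintro rfl; exact ⟨.null, rfl⟩

lemma alpha_nullable : alphaL ({Abst.nullable} : Set Abst) = .nullable := by
  unfold alphaL
  rw [if_neg (by simp), if_neg (by simp), if_pos rfl]

theorem naive_lifting_not_associative :
    njoin .null (njoin .nonnull .q) = .q ∧
    njoin (njoin .null .nonnull) .q = .nullable ∧
    njoin .null (njoin .nonnull .q) ≠ njoin (njoin .null .nonnull) .q := by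
  have h1 : njoin .null (njoin .nonnull .q) = .q := by
    rw [step1]; unfold njoin; rw [set2, alpha_pair2]
  have h2 : njoin (njoin .null .nonnull) .q = .nullable := by
    have : njoin .null .nonnull = .nullable := by
      unfold njoin; rw [set3, alpha_nullable]
    rw [this]; unfold njoin; rw [set4, alpha_nullable]
  exact ⟨h1, h2, by rw [h1, h2]; decide⟩
end

section
/- Kildall's worklist algorithm terminates for any monotone flow function when the semilattice of abstract states has finite height: since the abstract-state semilattice Map = Var → Abst (Var finite) has finite height and results only increase under join, the worklist eventually empties. -/
/-!
Since `π` is only ever updated by joins, each step either strictly enlarges it or leaves it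
unchanged, and in the latter case no successor is re-added, so the worklist loses the processed
vertex.
Hence the pair `(π, #worklist)` strictly decreases in the lexicographic order of
`(Vert → Var → A)ᵒᵈ × ℕ`, which is well founded because the state maps form a finite poset.
-/

open Finset

section Kildall

variable {Vert M : Type*} [DecidableEq Vert] [SemilatticeSup M] [DecidableEq M]

def KildallStep (succ : Vert → Finset Vert) (flow : Vert → M → M)
    (s t : (Vert → M) × Finset Vert) : Prop :=
  ∃ v ∈ s.2,
    t.1 = (fun u =>
      if u ∈ succ v ∧ flow v (s.1 v) ⊔ s.1 u ≠ s.1 u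
      then s.1 u ⊔ flow v (s.1 v) else s.1 u) ∧
    t.2 = (s.2.erase v) ∪ (succ v).filter (fun u => flow v (s.1 v) ⊔ s.1 u ≠ s.1 u)

namespace KildallStep

variable {succ : Vert → Finset Vert} {flow : Vert → M → M} {s t : (Vert → M) × Finset Vert}

theorem fst_le (h : KildallStep succ flow s t) : s.1 ≤ t.1 := by
  obtain ⟨v, -, hπ, -⟩ := h
  intro u
  rw [hπ]
  dsimp only
  split
  · exact le_sup_left
  · exact le_rfl

theorem card_snd_lt_of_fst_eq (h : KildallStep succ flow s t) (heq : t.1 = s.1) :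
    #t.2 < #s.2 := by
  obtain ⟨v, hv, hπ, hW⟩ := h
  have no_readded : (succ v).filter (fun u => flow v (s.1 v) ⊔ s.1 u ≠ s.1 u) = ∅ := by
    refine filter_eq_empty_iff.mpr fun u hu hne => hne ?_
    have hu_eq := congrFun (hπ.symm.trans heq) u
    simp only [if_pos (And.intro hu hne)] at hu_eq
    rwa [sup_comm]
  rw [hW, no_readded, union_empty]
  exact card_erase_lt_of_mem hv

theorem lex_lt (h : KildallStep succ flow s t) :
    Prod.Lex (· > ·) (· < ·) (t.1, #t.2) (s.1, #s.2) := by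
  rcases h.fst_le.lt_or_eq with hlt | heq
  · exact Prod.Lex.left _ _ hlt
  · rw [← heq]
    exact Prod.Lex.right _ (h.card_snd_lt_of_fst_eq heq.symm)

end KildallStep

theorem wellFounded_flip_kildallStep [WellFoundedGT (Vert → M)]
    (succ : Vert → Finset Vert) (flow : Vert → M → M) :
    WellFounded (flip (KildallStep succ flow)) :=
  Subrelation.wf KildallStep.lex_lt
    (InvImage.wf (fun s : (Vert → M) × Finset Vert => (s.1, #s.2))
      (wellFounded_gt.prod_lex wellFounded_lt))

end Kildall

theorem kildall_terminates_general
    {Vert Var A : Type} [Fintype Vert] [DecidableEq Vert]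
    [Fintype Var] [DecidableEq A] [Fintype A] [SemilatticeSup A]
    (succ : Vert → Finset Vert)
    (flow : Vert → (Var → A) → (Var → A)) :
    ¬ ∃ f : ℕ → (Vert → Var → A) × Finset Vert,
        ∀ n : ℕ, ∃ v ∈ (f n).2,
          (f (n + 1)).1 = (fun u =>
            if u ∈ succ v ∧ flow v ((f n).1 v) ⊔ (f n).1 u ≠ (f n).1 u
            then (f n).1 u ⊔ flow v ((f n).1 v) else (f n).1 u) ∧
          (f (n + 1)).2 = ((f n).2.erase v) ∪
            (succ v).filter (fun u => flow v ((f n).1 v) ⊔ (f n).1 u ≠ (f n).1 u) := by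
  rintro ⟨f, hf⟩
  exact (wellFounded_iff_isEmpty_descending_chain.mp
    (wellFounded_flip_kildallStep succ flow)).elim ⟨f, hf⟩

theorem kildall_terminates
    {Vert Var A : Type} [Fintype Vert] [DecidableEq Vert]
    [Fintype Var] [DecidableEq A] [Fintype A] [SemilatticeSup A]
    (succ : Vert → Finset Vert)
    (flow : Vert → (Var → A) → (Var → A))
    (hmono : ∀ v : Vert, Monotone (flow v)) :
    ¬ ∃ f : ℕ → (Vert → Var → A) × Finset Vert,
        ∀ n : ℕ, ∃ v ∈ (f n).2,
          (f (n + 1)).1 = (fun u =>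
            if u ∈ succ v ∧ flow v ((f n).1 v) ⊔ (f n).1 u ≠ (f n).1 u
            then (f n).1 u ⊔ flow v ((f n).1 v) else (f n).1 u) ∧
          (f (n + 1)).2 = ((f n).2.erase v) ∪
            (succ v).filter (fun u => flow v ((f n).1 v) ⊔ (f n).1 u ≠ (f n).1 u) :=
  kildall_terminates_general succ flow
end

section
/- Fixpoint lemma for Kildall's algorithm: if flow is monotone and π is the result of Kildall's worklist algorithm on program p, then for every edge v₁ → v₂ in the control flow graph with instruction ι at v₁, flow(ι, π(v₁)) ⊑ π(v₂). -/
def KilStep {Vert Var A : Type} [DecidableEq Vert] [Fintype Var] [DecidableEq A]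
    [SemilatticeSup A]
    (succ : Vert → Finset Vert) (flow : Vert → (Var → A) → (Var → A))
    (s s' : (Vert → Var → A) × Finset Vert) : Prop :=
  ∃ v ∈ s.2,
    s'.1 = (fun u =>
      if u ∈ succ v ∧ flow v (s.1 v) ⊔ s.1 u ≠ s.1 u
      then s.1 u ⊔ flow v (s.1 v) else s.1 u) ∧
    s'.2 = (s.2.erase v) ∪
      (succ v).filter (fun u => flow v (s.1 v) ⊔ s.1 u ≠ s.1 u)

theorem kildall_fixpoint
    {Vert Var A : Type} [Fintype Vert] [DecidableEq Vert]
    [Fintype Var] [DecidableEq A] [SemilatticeSup A] [OrderBot A]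
    (succ : Vert → Finset Vert)
    (flow : Vert → (Var → A) → (Var → A))
    (hmono : ∀ v : Vert, Monotone (flow v))
    (s : (Vert → Var → A) × Finset Vert)
    (hreach : Relation.ReflTransGen (KilStep succ flow)
      ((fun _ _ => ⊥, Finset.univ) : (Vert → Var → A) × Finset Vert) s)
    (hdone : s.2 = ∅) :
    ∀ v₁ v₂ : Vert, v₂ ∈ succ v₁ → flow v₁ (s.1 v₁) ≤ s.1 v₂ := by
  suffices h : ∀ v₁ v₂ : Vert, v₂ ∈ succ v₁ → v₁ ∈ s.2 ∨ flow v₁ (s.1 v₁) ≤ s.1 v₂ by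
    intro v₁ v₂ hv
    rcases h v₁ v₂ hv with h1 | h1
    · rw [hdone] at h1; exact absurd h1 (Finset.notMem_empty _)
    · exact h1
  clear hdone
  induction hreach with
  | refl => intro v₁ _ _; exact Or.inl (Finset.mem_univ v₁)
  | tail hab hstep ih =>
    rename_i b c
    obtain ⟨v, hv, hπ, hW⟩ := hstep
    intro v₁ v₂ hedge
    by_cases hc : v₁ ∈ c.2
    · exact Or.inl hc
    right
    have hle : ∀ u, b.1 u ≤ c.1 u := by
      intro u; rw [hπ]; dsimp only
      split
      · exact le_sup_left
      · exact le_rfl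
    have hkey : ∀ u ∈ succ v, flow v (b.1 v) ≤ c.1 u := by
      intro u hu; rw [hπ]; dsimp only
      split
      · exact le_sup_right
      · next h =>
        push_neg at h
        exact sup_eq_right.mp (h hu)
    have hnotcond : ¬ (v₁ ∈ succ v ∧ flow v (b.1 v) ⊔ b.1 v₁ ≠ b.1 v₁) := by
      intro hcond
      apply hc
      rw [hW]
      exact Finset.mem_union_right _ (Finset.mem_filter.mpr ⟨hcond.1, hcond.2⟩)
    have hfix : c.1 v₁ = b.1 v₁ := by
      rw [hπ]; dsimp only; rw [if_neg hnotcond]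
    by_cases hv1 : v₁ = v
    · subst hv1
      rw [hfix]
      exact hkey v₂ hedge
    · have hb : v₁ ∉ b.2 := by
        intro hin
        exact hc (hW ▸ Finset.mem_union_left _ (Finset.mem_erase.mpr ⟨hv1, hin⟩))
      rcases ih v₁ v₂ hedge with h1 | h1
      · exact absurd h1 hb
      · rw [hfix]
        exact h1.trans (hle v₂)
end
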